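/- Let H be a complex Hilbert space and u ∈ H. Suppose (Φ_i) is an increasing sequence of closed subspaces of H with 0 ∈ Φ_0, and u_i is the orthogonal projection of u onto Φ_i. Assume that for each i ≥ 1 there is a unit vector ψ_i ∈ Φ_i with ‖(u - u_{i-1})/‖u - u_{i-1}‖ - ψ_i‖ ≤ 2^{3/2} τ_i/(2 - τ_i) whenever u ≠ u_{i-1}, where 0 < τ_i < 1. Then for every i, ‖u - u_i‖ ≤ ‖u - u_0‖ · ∏_{j=1}^{i} min{1, 2^{3/2} τ_j/(2 - τ_j)}. -/

import Mathlib

/-!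
The error `‖u - u_i‖` never increases, since `u_{i-1} ∈ Φ_{i-1} ⊆ Φ_i`, and by minimality of the
orthogonal projection it is at most the distance from `u` to the competitor
`u_{i-1} + ‖u - u_{i-1}‖ ψ_i ∈ Φ_i`, which is `‖u - u_{i-1}‖` times the distance from the
normalized residual to `ψ_i`. Iterating this contraction gives the product bound.
-/

namespace Submodule

variable {𝕜 E : Type*} [RCLike 𝕜] [NormedAddCommGroup E] [InnerProductSpace 𝕜 E]

theorem norm_sub_starProjection_le_of_mem (K : Submodule 𝕜 E) [K.HasOrthogonalProjection]
    (u : E) {v : E} (hv : v ∈ K) : ‖u - K.starProjection u‖ ≤ ‖u - v‖ := by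
  rw [starProjection_minimal]
  exact ciInf_le ⟨0, by rintro _ ⟨x, rfl⟩; positivity⟩ (⟨v, hv⟩ : K)

theorem norm_sub_starProjection_le_mul (K : Submodule 𝕜 E) [K.HasOrthogonalProjection]
    (u : E) {w ψ : E} (hw : w ∈ K) (hψ : ψ ∈ K) :
    ‖u - K.starProjection u‖ ≤ ‖u - w‖ * ‖(‖u - w‖⁻¹ : 𝕜) • (u - w) - ψ‖ := by
  have hmem : w + (‖u - w‖ : 𝕜) • ψ ∈ K := K.add_mem hw (K.smul_mem _ hψ)
  have hdecomp : u - (w + (‖u - w‖ : 𝕜) • ψ) =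
      (‖u - w‖ : 𝕜) • ((‖u - w‖⁻¹ : 𝕜) • (u - w) - ψ) := by
    rcases eq_or_ne u w with rfl | hne
    · simp
    · have : (‖u - w‖ : 𝕜) ≠ 0 := by simpa [sub_eq_zero] using hne
      rw [smul_sub, smul_inv_smul₀ this]
      abel
  calc ‖u - K.starProjection u‖ ≤ ‖u - (w + (‖u - w‖ : 𝕜) • ψ)‖ :=
        K.norm_sub_starProjection_le_of_mem u hmem
    _ = ‖u - w‖ * ‖(‖u - w‖⁻¹ : 𝕜) • (u - w) - ψ‖ := by
        rw [hdecomp, norm_smul, RCLike.norm_ofReal, abs_norm]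

theorem norm_sub_starProjection_le_min_mul {K L : Submodule 𝕜 E} [K.HasOrthogonalProjection]
    [L.HasOrthogonalProjection] (hKL : K ≤ L) (u : E) {c : ℝ}
    (h : u ≠ K.starProjection u → ∃ ψ ∈ L,
      ‖(‖u - K.starProjection u‖⁻¹ : 𝕜) • (u - K.starProjection u) - ψ‖ ≤ c) :
    ‖u - L.starProjection u‖ ≤ min 1 c * ‖u - K.starProjection u‖ := by
  have hmem : K.starProjection u ∈ L := hKL (K.starProjection_apply_mem u)
  rw [min_mul_of_nonneg _ _ (norm_nonneg _), one_mul]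
  have hmono : ‖u - L.starProjection u‖ ≤ ‖u - K.starProjection u‖ :=
    L.norm_sub_starProjection_le_of_mem u hmem
  refine le_min hmono ?_
  rcases eq_or_ne u (K.starProjection u) with heq | hne
  · have hzero : ‖u - K.starProjection u‖ = 0 := by rw [← heq, sub_self, norm_zero]
    simpa [hzero] using hmono
  · obtain ⟨ψ, hψL, hψc⟩ := h hne
    calc ‖u - L.starProjection u‖ ≤ _ := L.norm_sub_starProjection_le_mul u hmem hψL
      _ ≤ _ := by rw [mul_comm]; gcongr

end Submodule

theorem le_mul_prod_Icc_of_le_mul {e a : ℕ → ℝ} (ha : ∀ i, 0 ≤ a i)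
    (he : ∀ i, e (i + 1) ≤ a (i + 1) * e i) (i : ℕ) :
    e i ≤ e 0 * ∏ j ∈ Finset.Icc 1 i, a j := by
  induction i with
  | zero => simp
  | succ i ih =>
    rw [Finset.prod_Icc_succ_top (Nat.le_add_left 1 i)]
    calc e (i + 1) ≤ a (i + 1) * e i := he i
      _ ≤ a (i + 1) * (e 0 * ∏ j ∈ Finset.Icc 1 i, a j) := by gcongr; exact ha _
      _ = _ := by ring

theorem stmt_5_general {H : Type*} [NormedAddCommGroup H] [InnerProductSpace ℂ H]
    (Φ : ℕ → Submodule ℂ H) [∀ i, CompleteSpace (Φ i)] (hmono : Monotone Φ)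
    (u : H) (τ : ℕ → ℝ) (hτ0 : ∀ i, 0 < τ i) (hτ1 : ∀ i, τ i < 1)
    (U : ℕ → H) (hU : ∀ i, U i = (Submodule.orthogonalProjectionOnto (Φ i) u : H))
    (hψ : ∀ i : ℕ, 1 ≤ i → u ≠ U (i - 1) →
      ∃ ψ ∈ Φ i, ‖ψ‖ = 1 ∧
        ‖(‖u - U (i - 1)‖ : ℝ)⁻¹ • (u - U (i - 1)) - ψ‖ ≤
          2 ^ ((3 : ℝ) / 2) * τ i / (2 - τ i)) :
    ∀ i : ℕ, ‖u - U i‖ ≤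
      ‖u - U 0‖ * ∏ j ∈ Finset.Icc 1 i, min 1 (2 ^ ((3 : ℝ) / 2) * τ j / (2 - τ j)) := by
  simp only [hU, Submodule.coe_orthogonalProjectionOnto_apply] at hψ ⊢
  have hfactor : ∀ j, 0 ≤ min 1 (2 ^ ((3 : ℝ) / 2) * τ j / (2 - τ j)) := fun j =>
    le_min zero_le_one (div_nonneg (by positivity [hτ0 j]) (by linarith [hτ1 j]))
  refine le_mul_prod_Icc_of_le_mul hfactor fun i => ?_
  refine Submodule.norm_sub_starProjection_le_min_mul (hmono i.le_succ) u fun hne => ?_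
  obtain ⟨ψ, hψΦ, -, hψc⟩ := hψ (i + 1) (Nat.le_add_left 1 i) hne
  exact ⟨ψ, hψΦ, by simpa [RCLike.real_smul_eq_coe_smul (K := ℂ)] using hψc⟩

theorem stmt_5 {H : Type*} [NormedAddCommGroup H] [InnerProductSpace ℂ H]
    [CompleteSpace H]
    (Φ : ℕ → Submodule ℂ H) [∀ i, CompleteSpace (Φ i)] (hmono : Monotone Φ)
    (u : H) (τ : ℕ → ℝ) (hτ0 : ∀ i, 0 < τ i) (hτ1 : ∀ i, τ i < 1)
    (U : ℕ → H) (hU : ∀ i, U i = (Submodule.orthogonalProjectionOnto (Φ i) u : H))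
    (hψ : ∀ i : ℕ, 1 ≤ i → u ≠ U (i - 1) →
      ∃ ψ ∈ Φ i, ‖ψ‖ = 1 ∧
        ‖(‖u - U (i - 1)‖ : ℝ)⁻¹ • (u - U (i - 1)) - ψ‖ ≤
          2 ^ ((3 : ℝ) / 2) * τ i / (2 - τ i)) :
    ∀ i : ℕ, ‖u - U i‖ ≤
      ‖u - U 0‖ * ∏ j ∈ Finset.Icc 1 i, min 1 (2 ^ ((3 : ℝ) / 2) * τ j / (2 - τ j)) :=
  stmt_5_general Φ hmono u τ hτ0 hτ1 U hU hψ
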